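/- On the universal cover ℝ² of the flat torus with strong Kropina metric of navigation data (flat metric, W = (1/√2, 1/√2)), for any point (u,v) with u + v > 0 the F-length of the Kropina geodesic from (0,0) to (u,v) equals (u² + v²) / (√2 (u+v)). -/

import Mathlib

/-!
Write `q = t • (a + w)` with `‖a‖ = ‖w‖`. Expanding, `‖q‖² = t² (‖a‖² + 2⟪a, w⟫ + ‖w‖²)` and
`⟪q, w⟫ = t (⟪a, w⟫ + ‖w‖²)`, so `‖q‖² = 2 t ⟪q, w⟫`: the arclength parameter is read off the
endpoint as `t = ‖q‖² / (2⟪q, w⟫)`. For `W = (1/√2, 1/√2)` one has `‖W‖ = 1` and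
`2⟪q, W⟫ = √2 (u + v)`, which is nonzero because `u + v > 0`.
-/

open scoped RealInnerProductSpace

section InnerProductSpace

variable {E : Type*} [NormedAddCommGroup E] [InnerProductSpace ℝ E]

theorem norm_smul_add_sq_eq_two_mul_inner {a w : E} (h : ‖a‖ = ‖w‖) (t : ℝ) :
    ‖t • (a + w)‖ ^ 2 = 2 * t * ⟪t • (a + w), w⟫ := by
  rw [norm_smul, mul_pow, Real.norm_eq_abs, sq_abs, norm_add_sq_real, real_inner_smul_left,
    inner_add_left, real_inner_self_eq_norm_sq, h]
  ring

theorem eq_norm_sq_div_inner_of_smul_add_eq {a w q : E} {t : ℝ} (h : ‖a‖ = ‖w‖)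
    (hq : t • (a + w) = q) (hqw : ⟪q, w⟫ ≠ 0) : t = ‖q‖ ^ 2 / (2 * ⟪q, w⟫) := by
  rw [eq_div_iff (mul_ne_zero two_ne_zero hqw), ← hq, norm_smul_add_sq_eq_two_mul_inner h]
  ring

end InnerProductSpace

namespace EuclideanSpace

theorem norm_sq_fin_two (x : EuclideanSpace ℝ (Fin 2)) : ‖x‖ ^ 2 = x 0 ^ 2 + x 1 ^ 2 := by
  simp [EuclideanSpace.norm_sq_eq, Fin.sum_univ_two]

theorem inner_fin_two (x y : EuclideanSpace ℝ (Fin 2)) : ⟪x, y⟫ = x 0 * y 0 + x 1 * y 1 := by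
  simp [PiLp.inner_apply, Fin.sum_univ_two, mul_comm]

end EuclideanSpace

theorem torus_cover_kropina_length_general
    (W q : EuclideanSpace ℝ (Fin 2))
    (hW0 : W 0 = 1 / Real.sqrt 2) (hW1 : W 1 = 1 / Real.sqrt 2)
    (hq : 0 < q 0 + q 1)
    (a : EuclideanSpace ℝ (Fin 2)) (ha : ‖a‖ = 1)
    (t : ℝ) (hreach : t • (a + W) = q) :
    t = (q 0 ^ 2 + q 1 ^ 2) / (Real.sqrt 2 * (q 0 + q 1)) := by
  have hsqrt : Real.sqrt 2 ^ 2 = 2 := Real.sq_sqrt zero_le_two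
  have hsqrt_pos : 0 < Real.sqrt 2 := by positivity
  have hW : ‖W‖ = 1 := by
    rw [← pow_eq_one_iff_of_nonneg (norm_nonneg W) two_ne_zero, EuclideanSpace.norm_sq_fin_two,
      hW0, hW1]
    field_simp
    linarith
  have hqW : 2 * ⟪q, W⟫ = Real.sqrt 2 * (q 0 + q 1) := by
    rw [EuclideanSpace.inner_fin_two, hW0, hW1]
    field_simp
    rw [hsqrt]
  have hqW_pos : 0 < ⟪q, W⟫ := by linarith [mul_pos hsqrt_pos hq]
  rw [eq_norm_sq_div_inner_of_smul_add_eq (ha.trans hW.symm) hreach hqW_pos.ne',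
    EuclideanSpace.norm_sq_fin_two, hqW]

/-- On the universal cover `ℝ²` of the flat torus with strong Kropina metric
of navigation data (flat metric, `W = (1/√2, 1/√2)`), the `F`-geodesics from the origin are
`P(t) = t • (a + W)` with `‖a‖ = 1`, `a ≠ -W`, parametrized by `F`-arclength.  If such a
geodesic reaches the point `q = (u,v)` with `u + v > 0` at parameter `t > 0`, then the
`F`-length of the geodesic is `t = (u² + v²)/(√2 (u + v))`. -/
theorem torus_cover_kropina_length
    (W q : EuclideanSpace ℝ (Fin 2))
    (hW0 : W 0 = 1 / Real.sqrt 2) (hW1 : W 1 = 1 / Real.sqrt 2)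
    (hq : 0 < q 0 + q 1)
    (a : EuclideanSpace ℝ (Fin 2)) (ha : ‖a‖ = 1) (hna : a ≠ -W)
    (t : ℝ) (ht : 0 < t) (hreach : t • (a + W) = q) :
    t = (q 0 ^ 2 + q 1 ^ 2) / (Real.sqrt 2 * (q 0 + q 1)) :=
  torus_cover_kropina_length_general W q hW0 hW1 hq a ha t hreach
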